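/- Let K ⊆ ℝⁿ be a proper subdual cone, C = 𝕊^{n-1} ∩ int(K), and A ∈ ℝ^{n×n} a symmetric matrix. Then the quadratic function q_A : C → ℝ, q_A(x) = ⟨Ax, x⟩, is spherically quasi-convex if and only if the Rayleigh quotient φ_A : int(K) → ℝ, φ_A(x) = ⟨Ax, x⟩/‖x‖², is quasi-convex, i.e., the sub-level set {x ∈ int(K) : φ_A(x) ≤ c} is a convex subset of ℝⁿ for every c ∈ ℝ. -/

import Mathlib

open scoped InnerProductSpace

/-- The (constant-speed) parametrization on `[0,1]` of the minimal geodesic segment of the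
unit sphere joining `x` to a non-antipodal point `y`, namely
`t ↦ (cos(t·d(x,y)) - ⟪x,y⟫ sin(t·d(x,y))/√(1-⟪x,y⟫²)) • x + (sin(t·d(x,y))/√(1-⟪x,y⟫²)) • y`,
where `d(x,y) = arccos ⟪x,y⟫` is the intrinsic distance on the sphere. -/
noncomputable def geoSeg {n : ℕ} (x y : EuclideanSpace ℝ (Fin n)) (t : ℝ) :
    EuclideanSpace ℝ (Fin n) :=
  (Real.cos (t * Real.arccos ⟪x, y⟫_ℝ) -
      ⟪x, y⟫_ℝ * Real.sin (t * Real.arccos ⟪x, y⟫_ℝ) / Real.sqrt (1 - ⟪x, y⟫_ℝ ^ 2)) • x +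
    (Real.sin (t * Real.arccos ⟪x, y⟫_ℝ) / Real.sqrt (1 - ⟪x, y⟫_ℝ ^ 2)) • y

/-- `γ`, parametrized (with constant speed) on `[0,1]`, is a minimal geodesic segment of the
unit sphere joining `x` to `y`.  For `y ≠ -x` it is the unique such segment `geoSeg x y`
(which is constantly `x` when `y = x`); for `y = -x` it is
`t ↦ cos(tπ) • x + sin(tπ) • v` for some unit vector `v` orthogonal to `x`. -/
def IsMinGeodesic {n : ℕ} (γ : ℝ → EuclideanSpace ℝ (Fin n))
    (x y : EuclideanSpace ℝ (Fin n)) : Prop :=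
  ‖x‖ = 1 ∧ ‖y‖ = 1 ∧
    ((y ≠ -x ∧ γ = geoSeg x y) ∨
      (y = -x ∧ ∃ v : EuclideanSpace ℝ (Fin n), ‖v‖ = 1 ∧ ⟪x, v⟫_ℝ = 0 ∧
        γ = fun t => Real.cos (t * Real.pi) • x + Real.sin (t * Real.pi) • v))

/-- A subset of the unit sphere is spherically convex if it contains every minimal geodesic
segment joining any two of its points. -/
def SphericallyConvex {n : ℕ} (C : Set (EuclideanSpace ℝ (Fin n))) : Prop :=
  ∀ x ∈ C, ∀ y ∈ C, ∀ γ : ℝ → EuclideanSpace ℝ (Fin n),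
    IsMinGeodesic γ x y → ∀ t ∈ Set.Icc (0 : ℝ) 1, γ t ∈ C

/-- `f` is spherically quasi-convex on `C`: along every minimal geodesic segment lying in `C`,
the composition with `f` is quasi-convex, i.e. `f(γ t) ≤ max (f(γ t₁)) (f(γ t₂))` for all
`t ∈ [t₁, t₂]`. -/
def SphQuasiConvexOn {n : ℕ} (C : Set (EuclideanSpace ℝ (Fin n)))
    (f : EuclideanSpace ℝ (Fin n) → ℝ) : Prop :=
  ∀ x ∈ C, ∀ y ∈ C, ∀ γ : ℝ → EuclideanSpace ℝ (Fin n),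
    IsMinGeodesic γ x y → (∀ t ∈ Set.Icc (0 : ℝ) 1, γ t ∈ C) →
    ∀ t₁ t t₂ : ℝ, 0 ≤ t₁ → t₁ ≤ t → t ≤ t₂ → t₂ ≤ 1 →
      f (γ t) ≤ max (f (γ t₁)) (f (γ t₂))

/-- Multiplication of an `n × n` real matrix with a vector of `EuclideanSpace ℝ (Fin n)`. -/
noncomputable def mulVecE {n : ℕ} (A : Matrix (Fin n) (Fin n) ℝ)
    (x : EuclideanSpace ℝ (Fin n)) : EuclideanSpace ℝ (Fin n) :=
  WithLp.toLp 2 (fun i => ∑ j, A i j * x j)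

section AuxLemmas

open Real Set

lemma arccos_le_arccos' {a b : ℝ} (h : a ≤ b) : Real.arccos b ≤ Real.arccos a := by
  unfold Real.arccos
  have := Real.monotone_arcsin h
  linarith

lemma sin_arccos_pos {c : ℝ} (h1 : -1 < c) (h2 : c < 1) : 0 < Real.sin (Real.arccos c) := by
  apply Real.sin_pos_of_pos_of_lt_pi
  · exact Real.arccos_pos.2 h2
  · exact lt_of_le_of_ne (Real.arccos_le_pi c) (fun h => by
      have := Real.arccos_eq_pi.1 h; linarith)

lemma arccos_lt_pi' {c : ℝ} (h1 : -1 < c) : Real.arccos c < Real.pi :=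
  lt_of_le_of_ne (Real.arccos_le_pi c) (fun h => by
    have := Real.arccos_eq_pi.1 h; linarith)

lemma mulVecE_smul {n : ℕ} (A : Matrix (Fin n) (Fin n) ℝ) (s : ℝ)
    (x : EuclideanSpace ℝ (Fin n)) : mulVecE A (s • x) = s • mulVecE A x := by
  ext i
  simp only [mulVecE, PiLp.smul_apply, PiLp.toLp_apply, smul_eq_mul, Finset.mul_sum]
  exact Finset.sum_congr rfl fun j _ => by ring

lemma inner_mulVecE_smul {n : ℕ} (A : Matrix (Fin n) (Fin n) ℝ) (s : ℝ)
    (x : EuclideanSpace ℝ (Fin n)) :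
    ⟪mulVecE A (s • x), s • x⟫_ℝ = s ^ 2 * ⟪mulVecE A x, x⟫_ℝ := by
  rw [mulVecE_smul, real_inner_smul_left, real_inner_smul_right]; ring

lemma rayleigh_smul {n : ℕ} (A : Matrix (Fin n) (Fin n) ℝ) {s : ℝ} (hs : s ≠ 0)
    (x : EuclideanSpace ℝ (Fin n)) :
    ⟪mulVecE A (s • x), s • x⟫_ℝ / ‖s • x‖ ^ 2 = ⟪mulVecE A x, x⟫_ℝ / ‖x‖ ^ 2 := by
  rw [inner_mulVecE_smul, norm_smul, mul_pow, Real.norm_eq_abs, sq_abs]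
  exact mul_div_mul_left _ _ (pow_ne_zero 2 hs)

lemma norm_comb {n : ℕ} {x y : EuclideanSpace ℝ (Fin n)} (hx : ‖x‖ = 1) (hy : ‖y‖ = 1)
    (a b : ℝ) : ‖a • x + b • y‖ ^ 2 = a ^ 2 + b ^ 2 + 2 * a * b * ⟪x, y⟫_ℝ := by
  rw [norm_add_sq_real, norm_smul, norm_smul, real_inner_smul_left, real_inner_smul_right,
    hx, hy]
  simp [mul_pow, sq_abs]
  ring

lemma trig_id (A B : ℝ) :
    Real.sin A ^ 2 + Real.sin B ^ 2 + 2 * Real.sin A * Real.sin B * Real.cos (A + B)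
      = Real.sin (A + B) ^ 2 := by
  rw [Real.sin_add, Real.cos_add]
  nlinarith [Real.sin_sq_add_cos_sq A, Real.sin_sq_add_cos_sq B]

lemma interp_x (θ t₁ t t₂ : ℝ) :
    Real.sin ((t₂ - t₁) * θ) * Real.sin ((1 - t) * θ) =
      Real.sin ((t₂ - t) * θ) * Real.sin ((1 - t₁) * θ) +
        Real.sin ((t - t₁) * θ) * Real.sin ((1 - t₂) * θ) := by
  simp only [sub_mul, one_mul, Real.sin_sub]
  ring

lemma interp_y (θ t₁ t t₂ : ℝ) :
    Real.sin ((t₂ - t₁) * θ) * Real.sin (t * θ) =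
      Real.sin ((t₂ - t) * θ) * Real.sin (t₁ * θ) +
        Real.sin ((t - t₁) * θ) * Real.sin (t₂ * θ) := by
  simp only [sub_mul, one_mul, Real.sin_sub]
  ring

lemma geoSeg_eq {n : ℕ} {x y : EuclideanSpace ℝ (Fin n)} (h1 : -1 < ⟪x, y⟫_ℝ)
    (h2 : ⟪x, y⟫_ℝ < 1) (t : ℝ) :
    geoSeg x y t =
      (Real.sin ((1 - t) * Real.arccos ⟪x, y⟫_ℝ) / Real.sin (Real.arccos ⟪x, y⟫_ℝ)) • x +
        (Real.sin (t * Real.arccos ⟪x, y⟫_ℝ) / Real.sin (Real.arccos ⟪x, y⟫_ℝ)) • y := by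
  set c := ⟪x, y⟫_ℝ with hc
  have hs : 0 < Real.sin (Real.arccos c) := sin_arccos_pos h1 h2
  have key : Real.cos (t * Real.arccos c) - c * Real.sin (t * Real.arccos c) / Real.sqrt (1 - c ^ 2)
      = Real.sin ((1 - t) * Real.arccos c) / Real.sin (Real.arccos c) := by
    rw [show (1 - t) * Real.arccos c = Real.arccos c - t * Real.arccos c by ring,
      Real.sin_sub, ← Real.sin_arccos, Real.cos_arccos h1.le h2.le]
    field_simp
  unfold geoSeg
  rw [key, ← Real.sin_arccos]

lemma geoSeg_self {n : ℕ} {x : EuclideanSpace ℝ (Fin n)} (hx : ‖x‖ = 1) (t : ℝ) :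
    geoSeg x x t = x := by
  have hc : ⟪x, x⟫_ℝ = 1 := by
    rw [real_inner_self_eq_norm_sq, hx]; norm_num
  simp [geoSeg, hc, hx]

lemma geoSeg_zero {n : ℕ} (x y : EuclideanSpace ℝ (Fin n)) : geoSeg x y 0 = x := by
  simp [geoSeg]

lemma geoSeg_one {n : ℕ} {x y : EuclideanSpace ℝ (Fin n)} (h1 : -1 < ⟪x, y⟫_ℝ)
    (h2 : ⟪x, y⟫_ℝ < 1) : geoSeg x y 1 = y := by
  rw [geoSeg_eq h1 h2]
  have hs : 0 < Real.sin (Real.arccos ⟪x, y⟫_ℝ) := sin_arccos_pos h1 h2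
  rw [show (1:ℝ) - 1 = 0 by norm_num, zero_mul, Real.sin_zero, zero_div, zero_smul, one_mul,
    div_self hs.ne', one_smul, zero_add]

lemma norm_geoSeg {n : ℕ} {x y : EuclideanSpace ℝ (Fin n)} (hx : ‖x‖ = 1) (hy : ‖y‖ = 1)
    (h1 : -1 < ⟪x, y⟫_ℝ) (h2 : ⟪x, y⟫_ℝ < 1) (t : ℝ) : ‖geoSeg x y t‖ = 1 := by
  set c := ⟪x, y⟫_ℝ with hc
  set θ := Real.arccos c with hθ
  have hs : 0 < Real.sin θ := sin_arccos_pos h1 h2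
  have htrig : Real.sin ((1 - t) * θ) ^ 2 + Real.sin (t * θ) ^ 2
      + 2 * Real.sin ((1 - t) * θ) * Real.sin (t * θ) * c = Real.sin θ ^ 2 := by
    have h := trig_id ((1 - t) * θ) (t * θ)
    rw [show (1 - t) * θ + t * θ = θ by ring] at h
    rw [hθ, Real.cos_arccos h1.le h2.le] at h
    exact h
  have hsq : ‖geoSeg x y t‖ ^ 2 = 1 := by
    rw [geoSeg_eq h1 h2, norm_comb hx hy]
    rw [← hc, ← hθ]
    field_simp
    linear_combination htrig
  have hn := norm_nonneg (geoSeg x y t)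
  nlinarith

lemma smul_mem_int {n : ℕ} {K : Set (EuclideanSpace ℝ (Fin n))}
    (hcone : ∀ x ∈ K, ∀ t : ℝ, 0 < t → t • x ∈ K)
    {x : EuclideanSpace ℝ (Fin n)} (hx : x ∈ interior K) {t : ℝ} (ht : 0 < t) :
    t • x ∈ interior K := by
  rcases mem_interior.1 hx with ⟨U, hUK, hUo, hxU⟩
  refine mem_interior.2 ⟨(fun z => t • z) '' U, ?_, (isOpenMap_smul₀ ht.ne') U hUo,
    ⟨x, hxU, rfl⟩⟩
  rintro - ⟨u, hu, rfl⟩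
  exact hcone u (hUK hu) t ht

lemma comb_mem_int {n : ℕ} {K : Set (EuclideanSpace ℝ (Fin n))}
    (hcone : ∀ x ∈ K, ∀ t : ℝ, 0 < t → t • x ∈ K) (hconv : Convex ℝ K)
    {x y : EuclideanSpace ℝ (Fin n)} (hx : x ∈ interior K) (hy : y ∈ interior K)
    {a b : ℝ} (ha : 0 ≤ a) (hb : 0 ≤ b) (hab : 0 < a + b) :
    a • x + b • y ∈ interior K := by
  have hp : (a / (a + b)) • x + (b / (a + b)) • y ∈ interior K :=
    hconv.interior hx hy (by positivity) (by positivity) (by field_simp)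
  have := smul_mem_int hcone hp hab
  rwa [smul_add, smul_smul, smul_smul, mul_div_cancel₀ _ hab.ne', mul_div_cancel₀ _ hab.ne']
    at this

lemma zero_not_int {n : ℕ} {K : Set (EuclideanSpace ℝ (Fin n))} (hn : 0 < n)
    (hpointed : K ∩ (-K) ⊆ {0}) : (0 : EuclideanSpace ℝ (Fin n)) ∉ interior K := by
  intro h0
  rcases Metric.mem_nhds_iff.1 (mem_interior_iff_mem_nhds.1 h0) with ⟨ε, hε, hball⟩
  set e : EuclideanSpace ℝ (Fin n) := EuclideanSpace.single ⟨0, hn⟩ (ε / 2) with he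
  have hne : ‖e‖ = ε / 2 := by
    rw [he, EuclideanSpace.norm_single, Real.norm_eq_abs, abs_of_pos (by linarith)]
  have h1 : e ∈ K := hball (by simp [Metric.mem_ball, hne]; linarith)
  have h2 : -e ∈ K := hball (by simp [Metric.mem_ball, hne]; linarith)
  have : e = 0 := hpointed ⟨h1, by simpa [Set.mem_neg] using h2⟩
  rw [this] at hne
  simp at hne
  linarith

lemma geoSeg_interp {n : ℕ} {x y : EuclideanSpace ℝ (Fin n)}
    (h1 : -1 < ⟪x, y⟫_ℝ) (h2 : ⟪x, y⟫_ℝ < 1) {t₁ t t₂ : ℝ}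
    (h0 : 0 ≤ t₁) (hta : t₁ ≤ t) (htb : t ≤ t₂) (h3 : t₂ ≤ 1) :
    ∃ α β : ℝ, 0 ≤ α ∧ 0 ≤ β ∧ geoSeg x y t = α • geoSeg x y t₁ + β • geoSeg x y t₂ := by
  set c := ⟪x, y⟫_ℝ with hc
  set θ := Real.arccos c with hθ
  have hθ0 : 0 ≤ θ := Real.arccos_nonneg c
  have hθπ : θ < Real.pi := arccos_lt_pi' h1
  have hs : 0 < Real.sin θ := sin_arccos_pos h1 h2
  rcases eq_or_lt_of_le (hta.trans htb) with heq | hlt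
  · refine ⟨1, 0, zero_le_one, le_refl 0, ?_⟩
    have ht : t = t₁ := le_antisymm (heq ▸ htb) hta
    rw [ht, one_smul, zero_smul, add_zero]
  · have hD : 0 < Real.sin ((t₂ - t₁) * θ) := by
      rcases eq_or_lt_of_le hθ0 with h | h
      · exfalso
        have := Real.arccos_eq_zero.1 h.symm
        linarith
      · apply Real.sin_pos_of_pos_of_lt_pi
        · exact mul_pos (by linarith) h
        · calc (t₂ - t₁) * θ ≤ 1 * θ := by nlinarith
          _ < Real.pi := by linarith
    refine ⟨Real.sin ((t₂ - t) * θ) / Real.sin ((t₂ - t₁) * θ),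
      Real.sin ((t - t₁) * θ) / Real.sin ((t₂ - t₁) * θ), ?_, ?_, ?_⟩
    · apply div_nonneg _ hD.le
      apply Real.sin_nonneg_of_nonneg_of_le_pi
      · nlinarith
      · nlinarith [Real.pi_pos]
    · apply div_nonneg _ hD.le
      apply Real.sin_nonneg_of_nonneg_of_le_pi
      · nlinarith
      · nlinarith [Real.pi_pos]
    · rw [geoSeg_eq h1 h2, geoSeg_eq h1 h2, geoSeg_eq h1 h2, ← hc, ← hθ]
      match_scalars
      · have hD' : Real.sin (θ * (t₂ - t₁)) ≠ 0 := by rw [mul_comm]; exact hD.ne'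
        field_simp
        simp only [mul_comm θ]
        linear_combination interp_x θ t₁ t t₂
      · have hD' : Real.sin (θ * (t₂ - t₁)) ≠ 0 := by rw [mul_comm]; exact hD.ne'
        field_simp
        simp only [mul_comm θ]
        linear_combination interp_y θ t₁ t t₂

lemma exists_param {n : ℕ} {x y : EuclideanSpace ℝ (Fin n)} (hx : ‖x‖ = 1) (hy : ‖y‖ = 1)
    (hc0 : 0 ≤ ⟪x, y⟫_ℝ) (hc1 : ⟪x, y⟫_ℝ < 1) {a b : ℝ} (ha : 0 ≤ a) (hb : 0 ≤ b)
    (hz : ‖a • x + b • y‖ = 1) :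
    ∃ t ∈ Set.Icc (0 : ℝ) 1, geoSeg x y t = a • x + b • y := by
  set c := ⟪x, y⟫_ℝ with hc
  have h1 : -1 < c := by linarith
  set θ := Real.arccos c with hθ
  have hS : 0 < Real.sin θ := sin_arccos_pos h1 hc1
  have hθ0 : 0 < θ := Real.arccos_pos.2 hc1
  set S := Real.sin θ with hSdef
  have hS2 : S ^ 2 = 1 - c ^ 2 := by
    rw [hSdef, hθ, Real.sin_arccos, Real.sq_sqrt (by nlinarith)]
  have habc : a ^ 2 + b ^ 2 + 2 * a * b * c = 1 := by
    have := norm_comb hx hy a b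
    rw [hz, ← hc] at this
    linarith [this]
  have key : (a + b * c) ^ 2 + (b * S) ^ 2 = 1 := by nlinarith
  have hub : a + b * c ≤ 1 := by nlinarith
  have hlb : -1 ≤ a + b * c := by nlinarith
  have hab1 : 1 ≤ a + b := by nlinarith
  have hcle : c ≤ a + b * c := by nlinarith
  set s := Real.arccos (a + b * c) with hs
  have hcos : Real.cos s = a + b * c := Real.cos_arccos hlb hub
  have hsin : Real.sin s = b * S := by
    rw [hs, Real.sin_arccos]
    rw [show 1 - (a + b * c) ^ 2 = (b * S) ^ 2 by linarith]
    exact Real.sqrt_sq (by positivity)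
  have hsle : s ≤ θ := by
    rw [hs, hθ]
    exact arccos_le_arccos' hcle
  have hs0 : 0 ≤ s := Real.arccos_nonneg _
  refine ⟨s / θ, ⟨by positivity, by rw [div_le_one hθ0]; exact hsle⟩, ?_⟩
  rw [geoSeg_eq h1 hc1, ← hc, ← hθ, ← hSdef]
  have htθ : s / θ * θ = s := div_mul_cancel₀ _ hθ0.ne'
  have h1t : (1 - s / θ) * θ = θ - s := by field_simp
  rw [htθ, h1t]
  have e1 : Real.sin (θ - s) / S = a := by
    rw [Real.sin_sub, ← hSdef, hsin, hcos]
    have hcosθ : Real.cos θ = c := by rw [hθ]; exact Real.cos_arccos h1.le hc1.le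
    rw [hcosθ]
    field_simp
    ring
  have e2 : Real.sin s / S = b := by
    rw [hsin]
    field_simp
  rw [e1, e2]

lemma geoSeg_mem_int {n : ℕ} {K : Set (EuclideanSpace ℝ (Fin n))}
    (hcone : ∀ x ∈ K, ∀ t : ℝ, 0 < t → t • x ∈ K) (hconv : Convex ℝ K)
    {x y : EuclideanSpace ℝ (Fin n)} (hx : ‖x‖ = 1) (hy : ‖y‖ = 1)
    (h1 : -1 < ⟪x, y⟫_ℝ) (h2 : ⟪x, y⟫_ℝ < 1)
    (hxK : x ∈ interior K) (hyK : y ∈ interior K) :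
    ∀ t ∈ Set.Icc (0 : ℝ) 1, geoSeg x y t ∈ Metric.sphere (0 : EuclideanSpace ℝ (Fin n)) 1 ∩ interior K := by
  intro t ht
  have hn1 := norm_geoSeg hx hy h1 h2 t
  refine ⟨mem_sphere_zero_iff_norm.2 hn1, ?_⟩
  set c := ⟪x, y⟫_ℝ with hc
  set θ := Real.arccos c with hθ
  have hθ0 : 0 ≤ θ := Real.arccos_nonneg c
  have hθπ : θ < Real.pi := arccos_lt_pi' h1
  have hs : 0 < Real.sin θ := sin_arccos_pos h1 h2
  set α := Real.sin ((1 - t) * θ) / Real.sin θ with hα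
  set β := Real.sin (t * θ) / Real.sin θ with hβ
  have hα0 : 0 ≤ α := by
    apply div_nonneg _ hs.le
    apply Real.sin_nonneg_of_nonneg_of_le_pi
    · nlinarith [ht.1, ht.2]
    · nlinarith [ht.1, ht.2, Real.pi_pos]
  have hβ0 : 0 ≤ β := by
    apply div_nonneg _ hs.le
    apply Real.sin_nonneg_of_nonneg_of_le_pi
    · nlinarith [ht.1, ht.2]
    · nlinarith [ht.1, ht.2, Real.pi_pos]
  have hrep : geoSeg x y t = α • x + β • y := geoSeg_eq h1 h2 t
  have hαβ : 0 < α + β := by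
    rcases (add_nonneg hα0 hβ0).lt_or_eq with h | h
    · exact h
    · exfalso
      have hα' : α = 0 := by linarith
      have hβ' : β = 0 := by linarith
      rw [hrep, hα', hβ', zero_smul, zero_smul, add_zero] at hn1
      simp at hn1
  rw [hrep]
  exact comb_mem_int hcone hconv hxK hyK hα0 hβ0 hαβ

end AuxLemmas

/-- For a proper subdual cone `K ⊆ ℝⁿ`, `C = 𝕊^{n-1} ∩ int K` and a symmetric matrix `A`,
the quadratic function `q_A(x) = ⟪Ax, x⟫` is spherically quasi-convex on `C` if and only if
the Rayleigh quotient `φ_A(x) = ⟪Ax, x⟫ / ‖x‖²` is quasi-convex on `int K`, i.e. all its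
sub-level sets are convex. -/
theorem quadratic_sph_quasiconvex_iff_rayleigh_quasiconvex {n : ℕ}
    (K : Set (EuclideanSpace ℝ (Fin n)))
    (hcone : ∀ x ∈ K, ∀ t : ℝ, 0 < t → t • x ∈ K)
    (hclosed : IsClosed K) (hconvex : Convex ℝ K)
    (hpointed : K ∩ (-K) ⊆ {0}) (hint : (interior K).Nonempty)
    (hsubdual : K ⊆ {x | ∀ y ∈ K, 0 ≤ ⟪x, y⟫_ℝ})
    (A : Matrix (Fin n) (Fin n) ℝ) (hA : A.IsSymm) :
    SphQuasiConvexOn (Metric.sphere 0 1 ∩ interior K)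
        (fun x => ⟪mulVecE A x, x⟫_ℝ) ↔
      ∀ c : ℝ, Convex ℝ {x | x ∈ interior K ∧ ⟪mulVecE A x, x⟫_ℝ / ‖x‖ ^ 2 ≤ c} := by
  rcases Nat.eq_zero_or_pos n with hn | hn
  · subst hn
    have hzero : ∀ z : EuclideanSpace ℝ (Fin 0), z = 0 := fun z => PiLp.ext fun i => Fin.elim0 i
    constructor
    · intro _ c u hu v hv a b ha hb hab
      have : a • u + b • v = u := by rw [hzero (a • u + b • v), hzero u]
      rwa [this]
    · intro _ x hx
      exfalso
      have h1 : ‖x‖ = 1 := mem_sphere_zero_iff_norm.1 hx.1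
      rw [hzero x] at h1
      simp at h1
  -- main case: n > 0
  have h0ni : (0 : EuclideanSpace ℝ (Fin n)) ∉ interior K := zero_not_int hn hpointed
  constructor
  · -- quadratic sph. quasiconvex → Rayleigh quasiconvex
    intro hq c u hu v hv a b ha hb hab
    obtain ⟨huK, huc⟩ := hu
    obtain ⟨hvK, hvc⟩ := hv
    set w := a • u + b • v with hwdef
    have hwK : w ∈ interior K := hconvex.interior huK hvK ha hb hab
    refine ⟨hwK, ?_⟩
    have hu0 : u ≠ 0 := fun h => h0ni (h ▸ huK)
    have hv0 : v ≠ 0 := fun h => h0ni (h ▸ hvK)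
    have hw0 : w ≠ 0 := fun h => h0ni (h ▸ hwK)
    have hnu : (0:ℝ) < ‖u‖ := norm_pos_iff.2 hu0
    have hnv : (0:ℝ) < ‖v‖ := norm_pos_iff.2 hv0
    have hnw : (0:ℝ) < ‖w‖ := norm_pos_iff.2 hw0
    have hu' : ‖u‖ ≠ 0 := hnu.ne'
    have hv' : ‖v‖ ≠ 0 := hnv.ne'
    have hw' : ‖w‖ ≠ 0 := hnw.ne'
    set x := ‖u‖⁻¹ • u with hxdef
    set y := ‖v‖⁻¹ • v with hydef
    have hx1 : ‖x‖ = 1 := by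
      rw [hxdef, norm_smul, norm_inv, norm_norm, inv_mul_cancel₀ hnu.ne']
    have hy1 : ‖y‖ = 1 := by
      rw [hydef, norm_smul, norm_inv, norm_norm, inv_mul_cancel₀ hnv.ne']
    have hxK : x ∈ interior K := smul_mem_int hcone huK (inv_pos.2 hnu)
    have hyK : y ∈ interior K := smul_mem_int hcone hvK (inv_pos.2 hnv)
    have hux : u = ‖u‖ • x := by
      rw [hxdef, smul_smul, mul_inv_cancel₀ hnu.ne', one_smul]
    have hvy : v = ‖v‖ • y := by
      rw [hydef, smul_smul, mul_inv_cancel₀ hnv.ne', one_smul]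
    have hfx : ⟪mulVecE A x, x⟫_ℝ / ‖x‖ ^ 2 ≤ c := by
      rw [← rayleigh_smul A hnu.ne' x, ← hux]; exact huc
    have hfy : ⟪mulVecE A y, y⟫_ℝ / ‖y‖ ^ 2 ≤ c := by
      rw [← rayleigh_smul A hnv.ne' y, ← hvy]; exact hvc
    by_cases hxy : x = y
    · -- parallel case
      have hwx : w = (a * ‖u‖ + b * ‖v‖) • x := by
        rw [hwdef, add_smul]
        congr 1
        · rw [hxdef, smul_smul, mul_assoc, mul_inv_cancel₀ hu', mul_one]
        · rw [hxy, hydef, smul_smul, mul_assoc, mul_inv_cancel₀ hv', mul_one]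
      have hs0 : a * ‖u‖ + b * ‖v‖ ≠ 0 := by
        intro h
        apply hw0
        rw [hwx, h, zero_smul]
      calc ⟪mulVecE A w, w⟫_ℝ / ‖w‖ ^ 2
          = ⟪mulVecE A x, x⟫_ℝ / ‖x‖ ^ 2 := by rw [hwx]; exact rayleigh_smul A hs0 x
        _ ≤ c := hfx
    · -- general case
      have hxKc : x ∈ K := interior_subset hxK
      have hyKc : y ∈ K := interior_subset hyK
      have hc0 : 0 ≤ ⟪x, y⟫_ℝ := hsubdual hxKc y hyKc
      have hcle : ⟪x, y⟫_ℝ ≤ 1 := by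
        have := real_inner_le_norm x y
        rw [hx1, hy1] at this
        linarith
      have hc1 : ⟪x, y⟫_ℝ < 1 :=
        lt_of_le_of_ne hcle (fun h => hxy ((inner_eq_one_iff_of_norm_eq_one hx1 hy1).1 h))
      have hm1 : -1 < ⟪x, y⟫_ℝ := by linarith
      have hynx : y ≠ -x := by
        intro h
        rw [h, inner_neg_right, real_inner_self_eq_norm_sq, hx1] at hc0
        norm_num at hc0
      set a' := a * ‖u‖ / ‖w‖ with ha'def
      set b' := b * ‖v‖ / ‖w‖ with hb'def
      have ha' : 0 ≤ a' := by positivity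
      have hb' : 0 ≤ b' := by positivity
      have hzdef : ‖w‖⁻¹ • w = a' • x + b' • y := by
        rw [ha'def, hb'def, hxdef, hydef, smul_smul, smul_smul,
          show a * ‖u‖ / ‖w‖ * ‖u‖⁻¹ = ‖w‖⁻¹ * a by field_simp,
          show b * ‖v‖ / ‖w‖ * ‖v‖⁻¹ = ‖w‖⁻¹ * b by field_simp,
          mul_smul, mul_smul, ← smul_add, hwdef]
      have hz1 : ‖a' • x + b' • y‖ = 1 := by
        rw [← hzdef, norm_smul, norm_inv, norm_norm, inv_mul_cancel₀ hnw.ne']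
      obtain ⟨t₀, ht₀, hgeo⟩ := exists_param hx1 hy1 hc0 hc1 ha' hb' hz1
      have hgC := geoSeg_mem_int hcone hconvex hx1 hy1 hm1 hc1 hxK hyK
      have hmain := hq x ⟨mem_sphere_zero_iff_norm.2 hx1, hxK⟩
        y ⟨mem_sphere_zero_iff_norm.2 hy1, hyK⟩ (geoSeg x y)
        ⟨hx1, hy1, Or.inl ⟨hynx, rfl⟩⟩ hgC 0 t₀ 1 le_rfl ht₀.1 ht₀.2 le_rfl
      rw [geoSeg_zero, geoSeg_one hm1 hc1, hgeo] at hmain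
      have hfz : ⟪mulVecE A (a' • x + b' • y), a' • x + b' • y⟫_ℝ ≤ c := by
        have h1 : ⟪mulVecE A x, x⟫_ℝ ≤ c := by
          rw [hx1] at hfx; simpa using hfx
        have h2 : ⟪mulVecE A y, y⟫_ℝ ≤ c := by
          rw [hy1] at hfy; simpa using hfy
        calc ⟪mulVecE A (a' • x + b' • y), a' • x + b' • y⟫_ℝ
            ≤ max ⟪mulVecE A x, x⟫_ℝ ⟪mulVecE A y, y⟫_ℝ := hmain
          _ ≤ c := max_le h1 h2
      have hwz : w = ‖w‖ • (a' • x + b' • y) := by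
        rw [← hzdef, smul_smul, mul_inv_cancel₀ hnw.ne', one_smul]
      calc ⟪mulVecE A w, w⟫_ℝ / ‖w‖ ^ 2
          = ⟪mulVecE A (a' • x + b' • y), a' • x + b' • y⟫_ℝ / ‖a' • x + b' • y‖ ^ 2 := by
            rw [hwz]; exact rayleigh_smul A hnw.ne' _
        _ = ⟪mulVecE A (a' • x + b' • y), a' • x + b' • y⟫_ℝ := by rw [hz1]; simp
        _ ≤ c := hfz
  · -- Rayleigh quasiconvex → quadratic sph. quasiconvex
    intro hconv x hx y hy γ hγ hγC t₁ t t₂ h01 h12 h23 h34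
    obtain ⟨hx1, hy1, hcase⟩ := hγ
    rcases hcase with ⟨hynx, hγeq⟩ | ⟨hyax, -⟩
    swap
    · exfalso
      have hxK : x ∈ K := interior_subset hx.2
      have hxnK : x ∈ -K := by
        rw [Set.mem_neg]
        rw [hyax] at hy
        exact interior_subset hy.2
      have : x = 0 := hpointed ⟨hxK, hxnK⟩
      rw [this] at hx1
      simp at hx1
    subst hγeq
    by_cases hxy : x = y
    · subst hxy
      rw [geoSeg_self hx1, geoSeg_self hx1]
      exact le_max_left _ _
    · have hcle : ⟪x, y⟫_ℝ ≤ 1 := by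
        have := real_inner_le_norm x y
        rw [hx1, hy1] at this
        linarith
      have hc1 : ⟪x, y⟫_ℝ < 1 :=
        lt_of_le_of_ne hcle (fun h => hxy ((inner_eq_one_iff_of_norm_eq_one hx1 hy1).1 h))
      have hcge : -1 ≤ ⟪x, y⟫_ℝ := by
        have := abs_real_inner_le_norm x y
        rw [hx1, hy1] at this
        rw [abs_le] at this
        linarith [this.1]
      have hm1 : -1 < ⟪x, y⟫_ℝ := by
        rcases hcge.lt_or_eq with h | h
        · exact h
        · exfalso
          apply hynx
          have : ⟪x, -y⟫_ℝ = 1 := by rw [inner_neg_right]; linarith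
          have hny : ‖-y‖ = 1 := by rw [norm_neg]; exact hy1
          have := (inner_eq_one_iff_of_norm_eq_one hx1 hny).1 this
          rw [this]; simp
      obtain ⟨α, β, hα, hβ, hid⟩ := geoSeg_interp hm1 hc1 h01 h12 h23 h34
      set M := max ⟪mulVecE A (geoSeg x y t₁), geoSeg x y t₁⟫_ℝ
        ⟪mulVecE A (geoSeg x y t₂), geoSeg x y t₂⟫_ℝ with hM
      have ht₁ : t₁ ∈ Set.Icc (0:ℝ) 1 := ⟨h01, le_trans (le_trans h12 h23) h34⟩
      have ht₂ : t₂ ∈ Set.Icc (0:ℝ) 1 := ⟨le_trans h01 (le_trans h12 h23), h34⟩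
      have htm : t ∈ Set.Icc (0:ℝ) 1 := ⟨le_trans h01 h12, le_trans h23 h34⟩
      have hn₁ : ‖geoSeg x y t₁‖ = 1 := mem_sphere_zero_iff_norm.1 (hγC t₁ ht₁).1
      have hn₂ : ‖geoSeg x y t₂‖ = 1 := mem_sphere_zero_iff_norm.1 (hγC t₂ ht₂).1
      have hnt : ‖geoSeg x y t‖ = 1 := mem_sphere_zero_iff_norm.1 (hγC t htm).1
      have hmem₁ : geoSeg x y t₁ ∈
          {z | z ∈ interior K ∧ ⟪mulVecE A z, z⟫_ℝ / ‖z‖ ^ 2 ≤ M} := by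
        refine ⟨(hγC t₁ ht₁).2, ?_⟩
        rw [hn₁, one_pow, div_one]
        exact le_max_left _ _
      have hmem₂ : geoSeg x y t₂ ∈
          {z | z ∈ interior K ∧ ⟪mulVecE A z, z⟫_ℝ / ‖z‖ ^ 2 ≤ M} := by
        refine ⟨(hγC t₂ ht₂).2, ?_⟩
        rw [hn₂, one_pow, div_one]
        exact le_max_right _ _
      have hαβ : 0 < α + β := by
        rcases (add_nonneg hα hβ).lt_or_eq with h | h
        · exact h
        · exfalso
          have hα' : α = 0 := by linarith
          have hβ' : β = 0 := by linarith
          rw [hα', hβ', zero_smul, zero_smul, add_zero] at hid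
          rw [hid] at hnt
          simp at hnt
      have hp := (hconv M) hmem₁ hmem₂ (a := α / (α + β)) (b := β / (α + β))
        (by positivity) (by positivity) (by field_simp)
      have hgt : geoSeg x y t =
          (α + β) • ((α / (α + β)) • geoSeg x y t₁ + (β / (α + β)) • geoSeg x y t₂) := by
        rw [hid]
        match_scalars
        · field_simp
        · field_simp
      calc ⟪mulVecE A (geoSeg x y t), geoSeg x y t⟫_ℝ
          = ⟪mulVecE A (geoSeg x y t), geoSeg x y t⟫_ℝ / ‖geoSeg x y t‖ ^ 2 := by
            rw [hnt]; simp
        _ = ⟪mulVecE A ((α / (α + β)) • geoSeg x y t₁ + (β / (α + β)) • geoSeg x y t₂),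
              (α / (α + β)) • geoSeg x y t₁ + (β / (α + β)) • geoSeg x y t₂⟫_ℝ /
              ‖(α / (α + β)) • geoSeg x y t₁ + (β / (α + β)) • geoSeg x y t₂‖ ^ 2 := by
            rw [hgt]; exact rayleigh_smul A hαβ.ne' _
        _ ≤ M := hp.2
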